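/- arXiv:0705.1818 — 5 statements merged into one kernel-verified Lean document; each statement's English description precedes it below -/
import Mathlib

section
/- Let K : ℝ^{2n} → ℝ be a nonnegative differentiable function whose gradient is Lipschitz with constant L, and let γ : [0,T] → ℝ^{2n} be a solution of γ'(t) = J∇K(γ(t)) such that K(γ(t)) = r² for all t ∈ [0,T]. Then the length of γ satisfies l(γ) = ∫₀ᵀ ‖γ'(t)‖ dt ≤ √(2L)·r·T. (This is the paper's length estimate l(γ) ≤ const·r·T for an integral curve of K on the level K = r² near the critical manifold, stated in a Darboux chart.) -/
/-- The standard complex structure `J` on `ℝ^{2n}`, realized on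
`EuclideanSpace ℝ (Fin n ⊕ Fin n)` with Darboux coordinates `(x, y)`:
`J (x, y) = (-y, x)`. -/
noncomputable def Jstd (n : ℕ) (v : EuclideanSpace ℝ (Fin n ⊕ Fin n)) :
    EuclideanSpace ℝ (Fin n ⊕ Fin n) :=
  WithLp.toLp 2 fun i =>
    match i with
    | Sum.inl k => -v (Sum.inr k)
    | Sum.inr k => v (Sum.inl k)

/-!
`J` is an isometry, so the speed of a Hamiltonian trajectory is `‖∇K(γ t)‖`. For a nonnegative
function with `L`-Lipschitz gradient, the descent lemma along `x - s ∇K(x)` gives a quadratic in `s`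
that is nonnegative for every `s`; its discriminant yields `‖∇K x‖² ≤ 2 L K x`. On the level set
`K = r²` the speed is therefore at most `√(2L) r`, and integrating over `[0, T]` gives the bound.
-/

open scoped RealInnerProductSpace NNReal

lemma norm_Jstd (n : ℕ) (v : EuclideanSpace ℝ (Fin n ⊕ Fin n)) : ‖Jstd n v‖ = ‖v‖ := by
  simp only [EuclideanSpace.norm_eq]
  congr 1
  simp [Jstd, Fintype.sum_sum_type, add_comm]

section LipschitzGradient

variable {E : Type*} [NormedAddCommGroup E] [InnerProductSpace ℝ E] [CompleteSpace E]
  {K : E → ℝ} {L : ℝ≥0}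

theorem HasGradientAt.hasDerivAt_comp_add_smul {g x v : E} {t : ℝ}
    (h : HasGradientAt K g (x + t • v)) :
    HasDerivAt (fun s : ℝ => K (x + s • v)) ⟪g, v⟫ t := by
  have hline : HasDerivAt (fun s : ℝ => x + s • v) v t := by
    simpa using ((hasDerivAt_id t).smul_const v).const_add x
  simpa [InnerProductSpace.toDual_apply_apply, Function.comp_def] using
    h.hasFDerivAt.comp_hasDerivAt t hline

theorem Differentiable.apply_add_le_of_lipschitzWith_gradient (hK : Differentiable ℝ K)
    (hLip : LipschitzWith L (gradient K)) (x v : E) :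
    K (x + v) ≤ K x + ⟪gradient K x, v⟫ + L / 2 * ‖v‖ ^ 2 := by
  set φ : ℝ → ℝ := fun t => K (x + t • v) - t * ⟪gradient K x, v⟫ - L / 2 * t ^ 2 * ‖v‖ ^ 2
  have hφ : ∀ t, HasDerivAt φ
      (⟪gradient K (x + t • v) - gradient K x, v⟫ - L * t * ‖v‖ ^ 2) t := by
    intro t
    have hKt : HasDerivAt (fun s : ℝ => K (x + s • v)) ⟪gradient K (x + t • v), v⟫ t :=
      (hK _).hasGradientAt.hasDerivAt_comp_add_smul
    have := (hKt.sub ((hasDerivAt_id t).mul_const ⟪gradient K x, v⟫)).sub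
      (((hasDerivAt_pow 2 t).const_mul (L / 2 : ℝ)).mul_const (‖v‖ ^ 2))
    exact this.congr_deriv (by rw [inner_sub_left]; norm_num only; ring)
  have hφ' : ∀ t ∈ interior (Set.Icc (0 : ℝ) 1),
      ⟪gradient K (x + t • v) - gradient K x, v⟫ - L * t * ‖v‖ ^ 2 ≤ 0 := by
    intro t ht
    rw [interior_Icc] at ht
    rw [sub_nonpos]
    have hlip : ‖gradient K (x + t • v) - gradient K x‖ ≤ L * (t * ‖v‖) := by
      simpa [← dist_eq_norm, norm_smul, abs_of_pos ht.1] using hLip.dist_le_mul (x + t • v) x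
    calc ⟪gradient K (x + t • v) - gradient K x, v⟫
        ≤ ‖gradient K (x + t • v) - gradient K x‖ * ‖v‖ := real_inner_le_norm _ _
      _ ≤ L * (t * ‖v‖) * ‖v‖ := by gcongr
      _ = L * t * ‖v‖ ^ 2 := by ring
  have hanti := antitoneOn_of_hasDerivWithinAt_nonpos (convex_Icc 0 1)
    (fun t _ => (hφ t).continuousAt.continuousWithinAt)
    (fun t _ => (hφ t).hasDerivWithinAt) hφ'
  have := hanti (Set.left_mem_Icc.2 zero_le_one) (Set.right_mem_Icc.2 zero_le_one) zero_le_one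
  simp only [φ, one_smul, zero_smul, add_zero] at this
  linarith

theorem sq_norm_gradient_le_of_nonneg (hK : Differentiable ℝ K)
    (hLip : LipschitzWith L (gradient K)) (hKnn : ∀ x, 0 ≤ K x) (x : E) :
    ‖gradient K x‖ ^ 2 ≤ 2 * L * K x := by
  set g := gradient K x
  have hquad : ∀ s : ℝ, 0 ≤ (L / 2 * ‖g‖ ^ 2) * (s * s) + (-‖g‖ ^ 2) * s + K x := by
    intro s
    have := hK.apply_add_le_of_lipschitzWith_gradient hLip x (-(s • g))
    rw [inner_neg_right, real_inner_smul_right, real_inner_self_eq_norm_sq, norm_neg,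
      norm_smul, Real.norm_eq_abs, mul_pow, sq_abs] at this
    nlinarith [hKnn (x + -(s • g))]
  have hdisc := discrim_le_zero hquad
  rw [discrim] at hdisc
  rcases (sq_nonneg ‖g‖).eq_or_lt with hg0 | hgpos
  · rw [← hg0]; have := hKnn x; positivity
  · nlinarith

theorem norm_gradient_le_sqrt_of_nonneg (hK : Differentiable ℝ K)
    (hLip : LipschitzWith L (gradient K)) (hKnn : ∀ x, 0 ≤ K x) (x : E) :
    ‖gradient K x‖ ≤ √(2 * L * K x) :=
  Real.le_sqrt_of_sq_le (sq_norm_gradient_le_of_nonneg hK hLip hKnn x)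

end LipschitzGradient

theorem Real.sqrt_two_mul_coe_toNNReal (a : ℝ) : √(2 * (a.toNNReal : ℝ)) = √(2 * a) := by
  rcases le_total 0 a with ha | ha
  · rw [Real.coe_toNNReal _ ha]
  · rw [Real.toNNReal_of_nonpos ha, NNReal.coe_zero, mul_zero, Real.sqrt_zero,
      Real.sqrt_eq_zero_of_nonpos (by linarith)]

theorem stmt2_general (n : ℕ) (K : EuclideanSpace ℝ (Fin n ⊕ Fin n) → ℝ)
    (hK : Differentiable ℝ K) (hKnn : ∀ x, 0 ≤ K x)
    (L : ℝ)
    (hLip : LipschitzWith L.toNNReal (fun x => gradient K x))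
    (T r : ℝ) (hT : 0 ≤ T) (hr : 0 ≤ r)
    (γ γ' : ℝ → EuclideanSpace ℝ (Fin n ⊕ Fin n))
    (hode : ∀ t ∈ Set.Icc (0 : ℝ) T, γ' t = Jstd n (gradient K (γ t)))
    (hlevel : ∀ t ∈ Set.Icc (0 : ℝ) T, K (γ t) = r ^ 2) :
    ∫ t in (0 : ℝ)..T, ‖γ' t‖ ≤ Real.sqrt (2 * L) * r * T := by
  have hspeed : ∀ t ∈ Set.uIoc 0 T, ‖‖γ' t‖‖ ≤ √(2 * L) * r := by
    intro t ht
    rw [Set.uIoc_of_le hT] at ht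
    have ht : t ∈ Set.Icc 0 T := Set.Ioc_subset_Icc_self ht
    calc ‖‖γ' t‖‖ = ‖gradient K (γ t)‖ := by rw [norm_norm, hode t ht, norm_Jstd]
      _ ≤ √(2 * L.toNNReal * r ^ 2) := by
        simpa only [hlevel t ht] using norm_gradient_le_sqrt_of_nonneg hK hLip hKnn (γ t)
      _ = √(2 * L) * r := by
        rw [Real.sqrt_mul (by positivity), Real.sqrt_sq hr, Real.sqrt_two_mul_coe_toNNReal]
  calc ∫ t in (0 : ℝ)..T, ‖γ' t‖ ≤ ‖∫ t in (0 : ℝ)..T, ‖γ' t‖‖ := le_abs_self _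
    _ ≤ √(2 * L) * r * |T - 0| := intervalIntegral.norm_integral_le_of_norm_le_const hspeed
    _ = √(2 * L) * r * T := by rw [sub_zero, abs_of_nonneg hT]

/-- Length estimate: if `K ≥ 0` is differentiable with `L`-Lipschitz gradient
and `γ : [0, T] → ℝ^{2n}` is an integral curve of the Hamiltonian vector field
`J∇K` lying on the level `K = r²`, then `l(γ) = ∫₀ᵀ ‖γ'(t)‖ dt ≤ √(2L)·r·T`. -/
theorem stmt2 (n : ℕ) (K : EuclideanSpace ℝ (Fin n ⊕ Fin n) → ℝ)
    (hK : Differentiable ℝ K) (hKnn : ∀ x, 0 ≤ K x)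
    (L : ℝ) (hL : 0 ≤ L)
    (hLip : LipschitzWith L.toNNReal (fun x => gradient K x))
    (T r : ℝ) (hT : 0 ≤ T) (hr : 0 ≤ r)
    (γ γ' : ℝ → EuclideanSpace ℝ (Fin n ⊕ Fin n))
    (hγ : ∀ t ∈ Set.Icc (0 : ℝ) T, HasDerivAt γ (γ' t) t)
    (hode : ∀ t ∈ Set.Icc (0 : ℝ) T, γ' t = Jstd n (gradient K (γ t)))
    (hlevel : ∀ t ∈ Set.Icc (0 : ℝ) T, K (γ t) = r ^ 2) :
    ∫ t in (0 : ℝ)..T, ‖γ' t‖ ≤ Real.sqrt (2 * L) * r * T :=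
  stmt2_general n K hK hKnn L hLip T r hT hr γ γ' hode hlevel
end

section
/- Let K : ℝ^{2m} × ℝ^{2k} → ℝ be a smooth (C^∞, or at least C³) function with K ≥ 0 and K(x,0) = 0 for all x, and assume that for every x the Hessian at y = 0 of the function y ↦ K(x,y) is positive definite (Morse–Bott non-degeneracy of the minimum along {y = 0} in the normal direction). Then for every compact set Q ⊆ ℝ^{2m} there exist constants a > 0, b ≥ 0 and δ > 0 such that for all (x,y) with x ∈ Q and ‖y‖ ≤ δ and all vectors (X,Y) ∈ ℝ^{2m} × ℝ^{2k}, the second derivative of K satisfies d²K_{(x,y)}((X,Y),(X,Y)) ≥ a‖Y‖² − b·r·‖X‖², where r = √(K(x,y)). (This is the paper's Hessian lower bound (DF2)/(3.4) in a product chart: the fiber contribution to the Hessian is positive of size a, while the base contribution is only of size r.) -/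
/-!
Since `K ≥ 0` vanishes on `{y = 0}`, so does `dK`; hence along the zero section the Hessian only
sees the fibre direction, `d²K_{(x,0)}((X,Y),(X,Y)) = d²_yK(x,0)(Y,Y) ≥ c‖Y‖²`, uniformly in
`x ∈ Q` by compactness. The Hessian is `C¹`, hence Lipschitz on `Q × B̄(0,1)`, so moving to
`(x,y)` costs at most `M‖y‖‖(X,Y)‖²`; for small `‖y‖` this leaves `(c/2)‖Y‖² − M‖y‖‖X‖²`.
The same bound along the segment from `(x,0)` to `(x,y)` gives `K(x,y) ≥ (c/4)‖y‖²` by Taylor,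
i.e. `‖y‖ ≤ 2√K/√c`, which turns `M‖y‖` into `b·√K`.
-/

open Set ContinuousLinearMap

theorem le_of_hasDerivAt_le_of_le {f g f' g' : ℝ → ℝ} {a b : ℝ}
    (hf : ∀ t ∈ Icc a b, HasDerivAt f (f' t) t) (hg : ∀ t ∈ Icc a b, HasDerivAt g (g' t) t)
    (ha : f a ≤ g a) (hle : ∀ t ∈ Ico a b, f' t ≤ g' t) : ∀ t ∈ Icc a b, f t ≤ g t :=
  image_le_of_deriv_right_le_deriv_boundary
    (fun t ht => (hf t ht).continuousAt.continuousWithinAt)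
    (fun t ht => (hf t (Ico_subset_Icc_self ht)).hasDerivWithinAt) ha
    (fun t ht => (hg t ht).continuousAt.continuousWithinAt)
    (fun t ht => (hg t (Ico_subset_Icc_self ht)).hasDerivWithinAt) hle

theorem half_le_of_le_second_deriv {g g' g'' : ℝ → ℝ} {A : ℝ}
    (hg : ∀ t ∈ Icc (0 : ℝ) 1, HasDerivAt g (g' t) t)
    (hg' : ∀ t ∈ Icc (0 : ℝ) 1, HasDerivAt g' (g'' t) t)
    (hA : ∀ t ∈ Icc (0 : ℝ) 1, A ≤ g'' t) (h0 : g 0 = 0) (h0' : g' 0 = 0) : A / 2 ≤ g 1 := by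
  have hlin : ∀ t ∈ Icc (0 : ℝ) 1, A * t ≤ g' t :=
    le_of_hasDerivAt_le_of_le (fun t _ => by simpa using (hasDerivAt_id t).const_mul A) hg'
      (by simp [h0']) (fun t ht => hA t (Ico_subset_Icc_self ht))
  have hquad : ∀ t ∈ Icc (0 : ℝ) 1, A / 2 * t ^ 2 ≤ g t :=
    le_of_hasDerivAt_le_of_le
      (fun t _ => by simpa using ((hasDerivAt_pow 2 t).const_mul (A / 2)).congr_deriv (by ring))
      hg (by simp [h0]) (fun t ht => hlin t (Ico_subset_Icc_self ht))
  simpa using hquad 1 (right_mem_Icc.2 zero_le_one)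

theorem half_le_of_le_fderiv_fderiv {G : Type*} [NormedAddCommGroup G] [NormedSpace ℝ G]
    {f : G → ℝ} (hf : ContDiff ℝ 2 f) {p v : G} {A : ℝ} (h0 : f p = 0)
    (h0' : fderiv ℝ f p v = 0)
    (hA : ∀ t ∈ Icc (0 : ℝ) 1, A ≤ fderiv ℝ (fderiv ℝ f) (p + t • v) v v) :
    A / 2 ≤ f (p + v) := by
  have hline : ∀ t : ℝ, HasDerivAt (fun t : ℝ => p + t • v) v t := fun t => by
    simpa using ((hasDerivAt_id t).smul_const v).const_add p
  have hf1 : Differentiable ℝ f := hf.differentiable (by norm_num)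
  have hf2 : Differentiable ℝ (fderiv ℝ f) :=
    (hf.fderiv_right (m := 1) le_rfl).differentiable one_ne_zero
  have hg' : ∀ t ∈ Icc (0 : ℝ) 1, HasDerivAt (fun t => fderiv ℝ f (p + t • v) v)
      (fderiv ℝ (fderiv ℝ f) (p + t • v) v v) t := fun t _ =>
    ((apply ℝ ℝ v).hasFDerivAt.comp _ (hf2 _).hasFDerivAt).comp_hasDerivAt t (hline t)
  simpa using half_le_of_le_second_deriv (g := fun t => f (p + t • v))
    (fun t _ => (hf1 _).hasFDerivAt.comp_hasDerivAt t (hline t)) hg' hA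
    (by simpa using h0) (by simpa using h0')

theorem IsCompact.exists_pos_mul_sq_le {P F : Type*} [TopologicalSpace P] [NormedAddCommGroup F]
    [NormedSpace ℝ F] [ProperSpace F] {q : P → F → ℝ} (hq : Continuous (Function.uncurry q))
    (hhom : ∀ x (t : ℝ) Y, q x (t • Y) = t ^ 2 * q x Y) {Q : Set P} (hQ : IsCompact Q)
    (hpos : ∀ x ∈ Q, ∀ Y ≠ 0, 0 < q x Y) : ∃ c > 0, ∀ x ∈ Q, ∀ Y, c * ‖Y‖ ^ 2 ≤ q x Y := by
  obtain ⟨c, hc0, hc⟩ := (hQ.prod (isCompact_sphere (0 : F) 1)).exists_forall_le' hq.continuousOn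
    fun p hp => hpos p.1 hp.1 p.2 fun h => by simp [h] at hp
  refine ⟨c, hc0, fun x hx Y => ?_⟩
  rcases eq_or_ne Y 0 with rfl | hY
  · have h0 : q x 0 = 0 := by simpa using hhom x 0 0
    simp [h0]
  have hu : ‖Y‖⁻¹ • Y ∈ Metric.sphere (0 : F) 1 := by simp [norm_smul, hY]
  calc c * ‖Y‖ ^ 2 ≤ q x (‖Y‖⁻¹ • Y) * ‖Y‖ ^ 2 := by gcongr; exact hc (x, _) ⟨hx, hu⟩
    _ = q x Y := by rw [hhom]; field_simp

section ProductChart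

variable {E F : Type*} [NormedAddCommGroup E] [NormedSpace ℝ E]
  [NormedAddCommGroup F] [NormedSpace ℝ F]

theorem fderiv_fderiv_prodMk_right_apply {K : E × F → ℝ} (hK : ContDiff ℝ 2 K) (x : E)
    (y Y Y' : F) :
    fderiv ℝ (fderiv ℝ fun y => K (x, y)) y Y Y' =
      fderiv ℝ (fderiv ℝ K) (x, y) (0, Y) (0, Y') := by
  have hK1 : Differentiable ℝ K := hK.differentiable (by norm_num)
  have hK2 : Differentiable ℝ (fderiv ℝ K) :=
    (hK.fderiv_right (m := 1) le_rfl).differentiable one_ne_zero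
  have hslice : fderiv ℝ (fun y => K (x, y)) =
      fun y => (compL ℝ F (E × F) ℝ).flip (inr ℝ E F) (fderiv ℝ K (x, y)) :=
    funext fun y => ((hK1 _).hasFDerivAt.comp y (hasFDerivAt_prodMk_right x y)).fderiv
  have hd : HasFDerivAt (fun y => (compL ℝ F (E × F) ℝ).flip (inr ℝ E F) (fderiv ℝ K (x, y)))
      (((compL ℝ F (E × F) ℝ).flip (inr ℝ E F)).comp
        ((fderiv ℝ (fderiv ℝ K) (x, y)).comp (inr ℝ E F))) y :=
    ((compL ℝ F (E × F) ℝ).flip (inr ℝ E F)).hasFDerivAt.comp y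
      ((hK2 _).hasFDerivAt.comp y (hasFDerivAt_prodMk_right x y))
  rw [hslice, hd.fderiv]
  simp

theorem fderiv_fderiv_apply_inl_eq_zero {K : E × F → ℝ} {x : E} {y : F}
    (hK : DifferentiableAt ℝ (fderiv ℝ K) (x, y)) (hcrit : ∀ x', fderiv ℝ K (x', y) = 0)
    (X : E) :
    fderiv ℝ (fderiv ℝ K) (x, y) (X, 0) = 0 := by
  have hderiv := (hK.hasFDerivAt.comp x (hasFDerivAt_prodMk_left x y)).unique
    ((hasFDerivAt_const (0 : E × F →L[ℝ] ℝ) x).congr_of_eventuallyEq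
      (.of_forall fun x' => hcrit x'))
  simpa using congr($hderiv X)

theorem fderiv_fderiv_apply_prod_self {K : E × F → ℝ} (hK : ContDiff ℝ 2 K) {y : F}
    (hcrit : ∀ x', fderiv ℝ K (x', y) = 0) (x : E) (X : E) (Y : F) :
    fderiv ℝ (fderiv ℝ K) (x, y) (X, Y) (X, Y) = fderiv ℝ (fderiv ℝ K) (x, y) (0, Y) (0, Y) := by
  have hK2 : DifferentiableAt ℝ (fderiv ℝ K) (x, y) :=
    ((hK.fderiv_right (m := 1) le_rfl).differentiable one_ne_zero).differentiableAt
  have hsymm := hK.contDiffAt.isSymmSndFDerivAt (x := (x, y)) (by simp)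
  have hX := fderiv_fderiv_apply_inl_eq_zero hK2 hcrit X
  have hsplit : ((X, Y) : E × F) = (X, 0) + (0, Y) := by simp
  rw [hsplit]
  simp only [map_add, hX, zero_add]
  rw [hsymm (0, Y) (X, 0), hX, zero_apply, zero_add]

theorem le_apply_self_of_norm_sub_le {B B' : E × F →L[ℝ] E × F →L[ℝ] ℝ} {c ε : ℝ}
    (hB : ∀ X Y, c * ‖Y‖ ^ 2 ≤ B (X, Y) (X, Y)) (hε : ‖B' - B‖ ≤ ε) (hεc : ε ≤ c / 2)
    (X : E) (Y : F) : c / 2 * ‖Y‖ ^ 2 - ε * ‖X‖ ^ 2 ≤ B' (X, Y) (X, Y) := by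
  set v : E × F := (X, Y)
  have hε0 : 0 ≤ ε := (norm_nonneg (B' - B)).trans hε
  have hdiff : |B' v v - B v v| ≤ ε * ‖v‖ ^ 2 := calc
    |B' v v - B v v| = ‖(B' - B) v v‖ := by simp [Real.norm_eq_abs]
    _ ≤ ‖B' - B‖ * ‖v‖ * ‖v‖ := (B' - B).le_opNorm₂ v v
    _ ≤ ε * ‖v‖ ^ 2 := by rw [mul_assoc, ← sq]; gcongr
  have hv : ‖v‖ ^ 2 ≤ ‖X‖ ^ 2 + ‖Y‖ ^ 2 := by
    rcases le_total ‖X‖ ‖Y‖ with h | h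
    · simp [v, Prod.norm_def, max_eq_right h]
    · simp [v, Prod.norm_def, max_eq_left h]
  nlinarith [abs_le.1 hdiff, hB X Y, mul_le_mul_of_nonneg_left hv hε0,
    mul_le_mul_of_nonneg_right hεc (sq_nonneg ‖Y‖)]

theorem exists_hessian_lower_bound_near_zero_section [ProperSpace F] {K : E × F → ℝ}
    (hK : ContDiff ℝ 3 K) (hcrit : ∀ x, fderiv ℝ K (x, 0) = 0) {Q : Set E} (hQ : IsCompact Q)
    {c : ℝ} (hc0 : 0 < c)
    (hc : ∀ x ∈ Q, ∀ Y, c * ‖Y‖ ^ 2 ≤ fderiv ℝ (fderiv ℝ K) (x, 0) (0, Y) (0, Y)) :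
    ∃ M ≥ (0 : ℝ), ∃ δ > (0 : ℝ), ∀ x ∈ Q, ∀ y : F, ‖y‖ ≤ δ → ∀ X Y,
      c / 2 * ‖Y‖ ^ 2 - M * ‖y‖ * ‖X‖ ^ 2 ≤ fderiv ℝ (fderiv ℝ K) (x, y) (X, Y) (X, Y) := by
  have hH : ContDiff ℝ 1 (fderiv ℝ (fderiv ℝ K)) :=
    (hK.fderiv_right (m := 2) le_rfl).fderiv_right le_rfl
  obtain ⟨L, hL⟩ := hH.locallyLipschitz.locallyLipschitzOn.exists_lipschitzOnWith_of_compact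
    (hQ.prod (isCompact_closedBall (0 : F) 1))
  refine ⟨L, L.2, min 1 (c / (2 * (L + 1))), by positivity, fun x hx y hy X Y => ?_⟩
  have hLy : L * ‖y‖ ≤ c / 2 := calc
    L * ‖y‖ ≤ L * (c / (2 * (L + 1))) := by gcongr; exact hy.trans (min_le_right _ _)
    _ ≤ c / 2 := by
      rw [← mul_div_assoc, div_le_div_iff₀ (by positivity) (by positivity)]
      nlinarith [L.2]
  have hdist : ‖fderiv ℝ (fderiv ℝ K) (x, y) - fderiv ℝ (fderiv ℝ K) (x, 0)‖ ≤ L * ‖y‖ := by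
    simpa using hL.norm_sub_le (x := (x, y)) (y := (x, 0))
      ⟨hx, by simpa using hy.trans (min_le_left _ _)⟩ ⟨hx, by simp⟩
  exact le_apply_self_of_norm_sub_le (fun X Y => (hc x hx Y).trans_eq
    (fderiv_fderiv_apply_prod_self (hK.of_le (by norm_num)) hcrit x X Y).symm) hdist hLy X Y

theorem mul_sq_le_of_le_fderiv_fderiv {K : E × F → ℝ} (hK : ContDiff ℝ 2 K) {x : E}
    (h0 : K (x, 0) = 0) (hcrit : fderiv ℝ K (x, 0) = 0) {a δ : ℝ}
    (ha : ∀ y : F, ‖y‖ ≤ δ → ∀ Y, a * ‖Y‖ ^ 2 ≤ fderiv ℝ (fderiv ℝ K) (x, y) (0, Y) (0, Y))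
    {y : F} (hy : ‖y‖ ≤ δ) : a / 2 * ‖y‖ ^ 2 ≤ K (x, y) := by
  have hseg : ∀ t ∈ Icc (0 : ℝ) 1, ‖t • y‖ ≤ δ := fun t ht => by
    rw [norm_smul, Real.norm_of_nonneg ht.1]
    exact (mul_le_of_le_one_left (norm_nonneg y) ht.2).trans hy
  have := half_le_of_le_fderiv_fderiv hK (p := (x, 0)) (v := (0, y)) (A := a * ‖y‖ ^ 2)
    h0 (by simp [hcrit]) fun t ht => by simpa using ha (t • y) (hseg t ht) y
  simp only [Prod.mk_add_mk, add_zero, zero_add] at this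
  linarith

end ProductChart

/-- Hessian lower bound near a Morse–Bott nondegenerate symplectic minimum, in a
product (Darboux) chart `ℝ^{2m} × ℝ^{2k}`: if `K ≥ 0` is `C³`, vanishes along
`{y = 0}`, and the normal Hessian `d²_y K(x, 0)` is positive definite for every
`x`, then on every compact set `Q` of base points there are constants `a > 0`,
`b ≥ 0`, `δ > 0` such that for `x ∈ Q`, `‖y‖ ≤ δ` and all `(X, Y)`,
`d²K_{(x,y)}((X,Y),(X,Y)) ≥ a‖Y‖² − b·r·‖X‖²` with `r = √(K(x,y))`. -/
theorem stmt3 (m k : ℕ)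
    (K : EuclideanSpace ℝ (Fin (2 * m)) × EuclideanSpace ℝ (Fin (2 * k)) → ℝ)
    (hK : ContDiff ℝ 3 K)
    (hKnn : ∀ p, 0 ≤ K p)
    (hK0 : ∀ x : EuclideanSpace ℝ (Fin (2 * m)), K (x, 0) = 0)
    (hHess : ∀ x : EuclideanSpace ℝ (Fin (2 * m)),
      ∀ Y : EuclideanSpace ℝ (Fin (2 * k)), Y ≠ 0 →
        0 < fderiv ℝ (fderiv ℝ (fun y => K (x, y))) 0 Y Y)
    (Q : Set (EuclideanSpace ℝ (Fin (2 * m)))) (hQ : IsCompact Q) :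
    ∃ a > (0 : ℝ), ∃ b ≥ (0 : ℝ), ∃ δ > (0 : ℝ),
      ∀ x ∈ Q, ∀ y : EuclideanSpace ℝ (Fin (2 * k)), ‖y‖ ≤ δ →
        ∀ (X : EuclideanSpace ℝ (Fin (2 * m))) (Y : EuclideanSpace ℝ (Fin (2 * k))),
          a * ‖Y‖ ^ 2 - b * Real.sqrt (K (x, y)) * ‖X‖ ^ 2 ≤
            fderiv ℝ (fderiv ℝ K) (x, y) (X, Y) (X, Y) := by
  have hK2 : ContDiff ℝ 2 K := hK.of_le (by norm_num)
  have hcrit : ∀ x, fderiv ℝ K (x, 0) = 0 := fun x =>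
    IsLocalMin.fderiv_eq_zero (.of_forall fun p => hK0 x ▸ hKnn p)
  have hHc : Continuous (fderiv ℝ (fderiv ℝ K)) :=
    (hK.fderiv_right (m := 2) le_rfl).continuous_fderiv (by norm_num)
  obtain ⟨c, hc0, hc⟩ := hQ.exists_pos_mul_sq_le
    (q := fun x Y => fderiv ℝ (fderiv ℝ K) (x, 0) (0, Y) (0, Y)) (by fun_prop)
    (fun x t Y => by
      rw [show ((0 : EuclideanSpace ℝ (Fin (2 * m))), t • Y) = t • (0, Y) by simp]
      simp only [map_smul, smul_apply, smul_eq_mul]; ring)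
    (fun x _ Y hY => fderiv_fderiv_prodMk_right_apply hK2 x 0 Y Y ▸ hHess x Y hY)
  obtain ⟨M, hM0, δ, hδ0, hlow⟩ :=
    exists_hessian_lower_bound_near_zero_section hK hcrit hQ hc0 hc
  refine ⟨c / 2, by positivity, 2 * M / √c, by positivity, δ, hδ0, fun x hx y hy X Y =>
    (hlow x hx y hy X Y).trans' ?_⟩
  have hr : √c * ‖y‖ / 2 ≤ √(K (x, y)) := by
    rw [Real.le_sqrt (by positivity) (hKnn _), div_pow, mul_pow, Real.sq_sqrt hc0.le]
    linarith [mul_sq_le_of_le_fderiv_fderiv hK2 (hK0 x) (hcrit x)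
      (fun y hy Y => by simpa using hlow x hx y hy 0 Y) hy]
  have hb : M * ‖y‖ ≤ 2 * M / √c * √(K (x, y)) := calc
    M * ‖y‖ = 2 * M / √c * (√c * ‖y‖ / 2) := by field_simp
    _ ≤ 2 * M / √c * √(K (x, y)) := by gcongr
  gcongr
end

section
/- Let H₀, H₁ : ℝ → Sym(2n,ℝ) be continuous families of symmetric matrices such that H₁(t) − H₀(t) is positive definite for every t. For s ∈ [0,1] set H_s(t) = (1−s)H₀(t) + sH₁(t), and let Φ_s(t) be the solution of ∂_t Φ_s(t) = J H_s(t) Φ_s(t) with a fixed initial condition Φ_s(0) = Φ₀ ∈ Sp(2n,ℝ) independent of s (so Φ_s(t) is C¹ in (s,t)). Then for every s ∈ [0,1] and every t > 0 the matrix K_s(t) := −J (∂_s Φ_s(t)) Φ_s(t)⁻¹ is symmetric and positive definite. (This is the key positivity claim, K_s(t) > 0 for all s ∈ [0,1] and t > 0, established in the proof of the symplectic Sturm comparison theorem, Proposition 2.2.) -/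
/-!
Write `P = Φ_s(t)` and `Q = Pᵀ J ∂_sΦ_s(t)`. Then `K_s(t) = (P⁻¹)ᵀ (-Q) P⁻¹`, so it suffices to show
that `-Q` is positive definite. Hamiltonian flows are symplectic, so `P` is invertible, and
differentiating `Φ_σᵀ J Φ_σ = J` in `σ` shows that `Q` is symmetric.

For flows `A`, `B` of Hamiltonians `H_a`, `H_b` one has `d/dτ (Aᵀ J B) = Aᵀ (H_a - H_b) B`. Applied
to `A = Φ_s`, `B = Φ_σ`, where `H_s - H_σ = (s - σ)(H₁ - H₀)`, this makes the difference quotients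
of `σ ↦ xᵀ Φ_s(t)ᵀ J Φ_σ(t) x` at `s` equal to `-∫₀ᵗ xᵀ Φ_s(τ)ᵀ (H₁ - H₀)(τ) Φ_σ(τ) x dτ`. By
compactness of `[0, t]` the integrand is at least some `c > 0` for all `σ` near `s`, hence
`xᵀ Q x ≤ -c t < 0`. Working with difference quotients in `σ`, `∂_sΦ` never has to be
differentiated in `t`.
-/

open Matrix Set Filter Topology

attribute [local instance] Matrix.normedAddCommGroup Matrix.normedSpace

section MatrixCalculus

variable {𝕜 : Type*} [NontriviallyNormedField 𝕜] {m n o : Type*} {S : Set 𝕜} {τ : 𝕜}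

theorem HasDerivWithinAt.matrix_apply [Fintype n] {A : 𝕜 → Matrix m n 𝕜} {A' : Matrix m n 𝕜}
    (hA : HasDerivWithinAt A A' S τ) (i : m) (j : n) :
    HasDerivWithinAt (fun u => A u i j) (A' i j) S τ :=
  hasDerivWithinAt_pi.1 (hasDerivWithinAt_pi.1 hA i) j

theorem HasDerivWithinAt.matrix_transpose [Fintype m] [Fintype n] {A : 𝕜 → Matrix m n 𝕜}
    {A' : Matrix m n 𝕜} (hA : HasDerivWithinAt A A' S τ) :
    HasDerivWithinAt (fun u => (A u)ᵀ) A'ᵀ S τ :=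
  hasDerivWithinAt_pi.2 fun i => hasDerivWithinAt_pi.2 fun j => hA.matrix_apply j i

theorem HasDerivWithinAt.matrix_mul [Fintype n] [Fintype o]
    {A : 𝕜 → Matrix m n 𝕜} {B : 𝕜 → Matrix n o 𝕜} {A' : Matrix m n 𝕜} {B' : Matrix n o 𝕜}
    (hA : HasDerivWithinAt A A' S τ) (hB : HasDerivWithinAt B B' S τ) :
    HasDerivWithinAt (fun u => A u * B u) (A' * B τ + A τ * B') S τ := by
  refine hasDerivWithinAt_pi.2 fun i => hasDerivWithinAt_pi.2 fun j => ?_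
  simp only [mul_apply]
  exact (HasDerivWithinAt.fun_sum fun k _ => (hA.matrix_apply i k).mul (hB.matrix_apply k j))
    |>.congr_deriv (by simp [mul_apply, Finset.sum_add_distrib])

theorem HasDerivWithinAt.dotProduct_mulVec [Fintype m] [Fintype n] {A : 𝕜 → Matrix m n 𝕜}
    {A' : Matrix m n 𝕜} (x : m → 𝕜) (y : n → 𝕜) (hA : HasDerivWithinAt A A' S τ) :
    HasDerivWithinAt (fun u => x ⬝ᵥ (A u *ᵥ y)) (x ⬝ᵥ (A' *ᵥ y)) S τ := by
  simp only [dotProduct, mulVec, Finset.mul_sum]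
  exact HasDerivWithinAt.fun_sum fun i _ => HasDerivWithinAt.fun_sum fun j _ =>
    ((hA.matrix_apply i j).mul_const (y j)).const_mul (x i)

theorem HasDerivAt.matrix_transpose [Fintype m] [Fintype n] {A : 𝕜 → Matrix m n 𝕜}
    {A' : Matrix m n 𝕜} (hA : HasDerivAt A A' τ) : HasDerivAt (fun u => (A u)ᵀ) A'ᵀ τ :=
  (hA.hasDerivWithinAt.matrix_transpose (S := univ)).hasDerivAt univ_mem

theorem HasDerivAt.matrix_mul [Fintype m] [Fintype n] [Fintype o]
    {A : 𝕜 → Matrix m n 𝕜} {B : 𝕜 → Matrix n o 𝕜} {A' : Matrix m n 𝕜} {B' : Matrix n o 𝕜}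
    (hA : HasDerivAt A A' τ) (hB : HasDerivAt B B' τ) :
    HasDerivAt (fun u => A u * B u) (A' * B τ + A τ * B') τ :=
  (hA.hasDerivWithinAt.matrix_mul (S := univ) hB.hasDerivWithinAt).hasDerivAt univ_mem

theorem HasDerivAt.dotProduct_mulVec [Fintype m] [Fintype n] {A : 𝕜 → Matrix m n 𝕜}
    {A' : Matrix m n 𝕜} (x : m → 𝕜) (y : n → 𝕜) (hA : HasDerivAt A A' τ) :
    HasDerivAt (fun u => x ⬝ᵥ (A u *ᵥ y)) (x ⬝ᵥ (A' *ᵥ y)) τ :=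
  (hA.hasDerivWithinAt.dotProduct_mulVec (S := univ) x y).hasDerivAt univ_mem

end MatrixCalculus

theorem ContinuousOn.exists_pos_eventually_forall_lt {X Y : Type*} [TopologicalSpace X]
    [TopologicalSpace Y] {S : Set X} {K : Set Y} {G : X × Y → ℝ} {x₀ : X}
    (hG : ContinuousOn G (S ×ˢ univ)) (hK : IsCompact K) (hx₀ : x₀ ∈ S)
    (hpos : ∀ y ∈ K, 0 < G (x₀, y)) : ∃ c > 0, ∀ᶠ x in 𝓝[S] x₀, ∀ y ∈ K, c < G (x, y) := by
  obtain ⟨c, hc, hcG⟩ := hK.exists_forall_le' (f := fun y => G (x₀, y))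
    (hG.comp (continuous_const.prodMk continuous_id).continuousOn fun _ _ => ⟨hx₀, trivial⟩) hpos
  refine ⟨c / 2, half_pos hc, ?_⟩
  have hnear : ∀ y ∈ K, ∀ᶠ z : X × Y in 𝓝 (x₀, y), z.1 ∈ S → c / 2 < G z := fun y hy => by
    have hlt : c / 2 < G (x₀, y) := by linarith [hcG y hy]
    have h := (hG (x₀, y) ⟨hx₀, trivial⟩).eventually (lt_mem_nhds hlt)
    rw [eventually_nhdsWithin_iff] at h
    exact h.mono fun z hz hzS => hz ⟨hzS, trivial⟩
  rw [eventually_nhdsWithin_iff]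
  exact (hK.eventually_forall_of_forall_eventually (P := fun x y => x ∈ S → c / 2 < G (x, y))
    hnear).mono fun x hx hxS y hy => hx y hy hxS

theorem HasDerivWithinAt.le_of_eventually_slope_le {f : ℝ → ℝ} {f' b x : ℝ} {S : Set ℝ}
    (hf : HasDerivWithinAt f f' S x) (hx : AccPt x (𝓟 S))
    (h : ∀ᶠ y in 𝓝[S \ {x}] x, slope f x y ≤ b) : f' ≤ b := by
  have := accPt_principal_iff_nhdsWithin.mp hx
  exact le_of_tendsto (hasDerivWithinAt_iff_tendsto_slope.mp hf) h

open scoped ComplexOrder in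
theorem Matrix.PosDef.mul_inv_of_conjTranspose_mul {𝕜 n : Type*} [RCLike 𝕜] [Fintype n]
    [DecidableEq n] {P M : Matrix n n 𝕜} (h : (Pᴴ * M).PosDef) (hP : IsUnit P.det) :
    (M * P⁻¹).PosDef := by
  have hinj : Function.Injective P⁻¹.mulVec :=
    mulVec_injective_iff_isUnit.2 ((isUnit_iff_isUnit_det _).2 (isUnit_nonsing_inv_det P hP))
  convert h.conjTranspose_mul_mul_same hinj using 1
  rw [← Matrix.mul_assoc, ← conjTranspose_mul, mul_nonsing_inv P hP, conjTranspose_one,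
    Matrix.one_mul]

theorem Matrix.posDef_neg_of_isSymm {n : Type*} [Fintype n] {Q : Matrix n n ℝ} (hQ : Q.IsSymm)
    (h : ∀ x ≠ 0, x ⬝ᵥ (Q *ᵥ x) < 0) : (-Q).PosDef := by
  refine .of_dotProduct_mulVec_pos ?_ fun x hx => ?_
  · rw [IsHermitian, conjTranspose_neg, conjTranspose_eq_transpose_of_trivial, hQ.eq]
  · simpa [neg_mulVec, star_trivial] using h x hx

section HamiltonianFlow

variable {l : Type*} [Fintype l] [DecidableEq l]

theorem HasDerivAt.transpose_mul_J_mul_of_hamiltonian {A B : ℝ → Matrix (l ⊕ l) (l ⊕ l) ℝ}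
    {Ha Hb : Matrix (l ⊕ l) (l ⊕ l) ℝ} {τ : ℝ} (hHa : Haᵀ = Ha)
    (hA : HasDerivAt A (J l ℝ * Ha * A τ) τ) (hB : HasDerivAt B (J l ℝ * Hb * B τ) τ) :
    HasDerivAt (fun u => (A u)ᵀ * J l ℝ * B u) ((A τ)ᵀ * (Ha - Hb) * B τ) τ := by
  have h := (hA.matrix_transpose.matrix_mul (hasDerivAt_const τ (J l ℝ))).matrix_mul hB
  rw [Matrix.mul_zero, add_zero] at h
  convert h using 1
  have hJJ : ∀ M : Matrix (l ⊕ l) (l ⊕ l) ℝ, J l ℝ * (J l ℝ * M) = -M := fun M => by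
    rw [← Matrix.mul_assoc, J_squared, Matrix.neg_mul, Matrix.one_mul]
  simp only [transpose_mul, J_transpose, hHa, Matrix.mul_assoc, Matrix.neg_mul, Matrix.mul_neg,
    hJJ, neg_neg, Matrix.sub_mul, Matrix.mul_sub, ← sub_eq_add_neg]

theorem mem_symplecticGroup_of_hamiltonian {Φ H : ℝ → Matrix (l ⊕ l) (l ⊕ l) ℝ}
    (hH : ∀ τ, (H τ)ᵀ = H τ) (hΦ : ∀ τ, HasDerivAt Φ (J l ℝ * H τ * Φ τ) τ)
    (h₀ : Φ 0 ∈ symplecticGroup l ℝ) (t : ℝ) : Φ t ∈ symplecticGroup l ℝ := by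
  have hconst : ∀ τ, HasDerivAt (fun u => (Φ u)ᵀ * J l ℝ * Φ u) 0 τ := fun τ => by
    simpa using (hΦ τ).transpose_mul_J_mul_of_hamiltonian (hH τ) (hΦ τ)
  rw [SymplecticGroup.mem_iff'] at h₀ ⊢
  rw [is_const_of_deriv_eq_zero (fun τ => (hconst τ).differentiableAt) (fun τ => (hconst τ).deriv)
    t 0, h₀]

theorem mul_le_dotProduct_transpose_mul_J_mul_sub_div
    {A B Ha Hb D : ℝ → Matrix (l ⊕ l) (l ⊕ l) ℝ} {r ε t : ℝ} (x : l ⊕ l → ℝ)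
    (hHa : ∀ τ, (Ha τ)ᵀ = Ha τ)
    (hA : ∀ τ, HasDerivAt A (J l ℝ * Ha τ * A τ) τ) (hB : ∀ τ, HasDerivAt B (J l ℝ * Hb τ * B τ) τ)
    (hr : r ≠ 0) (hD : ∀ τ, Ha τ - Hb τ = r • D τ) (ht : 0 ≤ t)
    (hε : ∀ τ ∈ Icc 0 t, ε ≤ x ⬝ᵥ (((A τ)ᵀ * D τ * B τ) *ᵥ x)) :
    ε * t ≤ (x ⬝ᵥ (((A t)ᵀ * J l ℝ * B t) *ᵥ x) - x ⬝ᵥ (((A 0)ᵀ * J l ℝ * B 0) *ᵥ x)) / r := by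
  set g : ℝ → ℝ := fun τ => x ⬝ᵥ (((A τ)ᵀ * J l ℝ * B τ) *ᵥ x) / r
  have hg : ∀ τ, HasDerivAt g (x ⬝ᵥ (((A τ)ᵀ * D τ * B τ) *ᵥ x)) τ := fun τ => by
    have h := (((hA τ).transpose_mul_J_mul_of_hamiltonian (hHa τ) (hB τ)).dotProduct_mulVec
      x x).div_const r
    rwa [hD, Matrix.mul_smul, Matrix.smul_mul, smul_mulVec, dotProduct_smul, smul_eq_mul,
      mul_div_cancel_left₀ _ hr] at h
  have := (convex_Icc 0 t).mul_sub_le_image_sub_of_le_deriv (f := g)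
    (fun τ _ => (hg τ).continuousAt.continuousWithinAt)
    (fun τ _ => (hg τ).differentiableAt.differentiableWithinAt)
    (fun τ hτ => (hg τ).deriv ▸ hε τ (interior_subset hτ)) 0 (left_mem_Icc.2 ht) t
    (right_mem_Icc.2 ht) ht
  simpa [g, sub_div] using this

theorem isSymm_transpose_mul_J_mul_of_hasDerivWithinAt {Φ : ℝ → Matrix (l ⊕ l) (l ⊕ l) ℝ}
    {Φ' : Matrix (l ⊕ l) (l ⊕ l) ℝ} {S : Set ℝ} {s : ℝ} (hS : UniqueDiffWithinAt ℝ S s)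
    (hs : s ∈ S) (hΦ : ∀ σ ∈ S, Φ σ ∈ symplecticGroup l ℝ) (hΦ' : HasDerivWithinAt Φ Φ' S s) :
    ((Φ s)ᵀ * J l ℝ * Φ').IsSymm := by
  have hprod :=
    (hΦ'.matrix_transpose.matrix_mul (hasDerivWithinAt_const s S (J l ℝ))).matrix_mul hΦ'
  have hconst : HasDerivWithinAt (fun σ => (Φ σ)ᵀ * J l ℝ * Φ σ) 0 S s :=
    (hasDerivWithinAt_const s S (J l ℝ)).congr
      (fun σ hσ => SymplecticGroup.mem_iff'.1 (hΦ σ hσ)) (SymplecticGroup.mem_iff'.1 (hΦ s hs))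
  have hsum := hS.eq_deriv _ hprod hconst
  rw [Matrix.mul_zero, add_zero] at hsum
  rw [IsSymm, transpose_mul, transpose_mul, J_transpose, transpose_transpose, Matrix.neg_mul,
    Matrix.mul_neg, ← Matrix.mul_assoc]
  exact neg_eq_of_add_eq_zero_right hsum

theorem dotProduct_transpose_mul_J_mul_deriv_mulVec_neg {H Φ : ℝ → ℝ → Matrix (l ⊕ l) (l ⊕ l) ℝ}
    {D : ℝ → Matrix (l ⊕ l) (l ⊕ l) ℝ} {Φ' : Matrix (l ⊕ l) (l ⊕ l) ℝ} {S : Set ℝ} {s t : ℝ}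
    (hs : s ∈ S) (hS : AccPt s (𝓟 S)) (ht : 0 < t) (hDc : Continuous D) (hDpos : ∀ τ, (D τ).PosDef)
    (hHsymm : ∀ τ, (H s τ)ᵀ = H s τ) (hHD : ∀ σ ∈ S, ∀ τ, H s τ - H σ τ = (s - σ) • D τ)
    (hΦc : ContinuousOn (fun p : ℝ × ℝ => Φ p.1 p.2) (S ×ˢ univ))
    (hODE : ∀ σ ∈ S, ∀ τ, HasDerivAt (Φ σ) (J l ℝ * H σ τ * Φ σ τ) τ)
    (hinit : ∀ σ ∈ S, Φ σ 0 = Φ s 0) (hsymp : ∀ τ, Φ s τ ∈ symplecticGroup l ℝ)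
    (hΦ' : HasDerivWithinAt (fun σ => Φ σ t) Φ' S s) {x : l ⊕ l → ℝ} (hx : x ≠ 0) :
    x ⬝ᵥ (((Φ s t)ᵀ * J l ℝ * Φ') *ᵥ x) < 0 := by
  set q : ℝ → ℝ := fun σ => x ⬝ᵥ (((Φ s t)ᵀ * J l ℝ * Φ σ t) *ᵥ x)
  set G : ℝ × ℝ → ℝ := fun p => x ⬝ᵥ (((Φ s p.2)ᵀ * D p.2 * Φ p.1 p.2) *ᵥ x)
  have hGc : ContinuousOn G (S ×ˢ univ) := by
    rw [continuousOn_iff_continuous_domRestrict]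
    have hΦs : Continuous fun p : S ×ˢ (univ : Set ℝ) => Φ s p.1.2 :=
      hΦc.comp_continuous (continuous_const.prodMk (continuous_snd.comp continuous_subtype_val))
        fun _ => ⟨hs, trivial⟩
    have hDc' : Continuous fun p : S ×ˢ (univ : Set ℝ) => D p.1.2 :=
      hDc.comp (continuous_snd.comp continuous_subtype_val)
    exact continuous_const.dotProduct (((hΦs.matrix_transpose.matrix_mul hDc').matrix_mul
      (continuousOn_iff_continuous_domRestrict.1 hΦc)).matrix_mulVec continuous_const)
  have hGpos : ∀ τ ∈ Icc 0 t, 0 < G (s, τ) := fun τ _ => by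
    have hinj : Function.Injective (Φ s τ).mulVec := mulVec_injective_iff_isUnit.2
      ((isUnit_iff_isUnit_det _).2 (SymplecticGroup.symplectic_det (hsymp τ)))
    simpa [G, conjTranspose_eq_transpose_of_trivial, star_trivial] using
      ((hDpos τ).conjTranspose_mul_mul_same hinj).dotProduct_mulVec_pos hx
  obtain ⟨c, hc, hcG⟩ := hGc.exists_pos_eventually_forall_lt isCompact_Icc hs hGpos
  have hq : HasDerivWithinAt q (x ⬝ᵥ (((Φ s t)ᵀ * J l ℝ * Φ') *ᵥ x)) S s := by
    simpa [q, Matrix.mul_assoc] using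
      ((hasDerivWithinAt_const s S ((Φ s t)ᵀ * J l ℝ)).matrix_mul hΦ').dotProduct_mulVec x x
  have hqs : q s = x ⬝ᵥ (((Φ s 0)ᵀ * J l ℝ * Φ s 0) *ᵥ x) := by
    simp only [q, SymplecticGroup.mem_iff'.1 (hsymp t), SymplecticGroup.mem_iff'.1 (hsymp 0)]
  have hslope : ∀ᶠ σ in 𝓝[S \ {s}] s, slope q s σ ≤ -(c * t) := by
    filter_upwards [nhdsWithin_mono s sdiff_subset hcG, self_mem_nhdsWithin] with σ hσc ⟨hσS, hσs⟩
    have h := mul_le_dotProduct_transpose_mul_J_mul_sub_div x hHsymm (hODE s hs) (hODE σ hσS)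
      (sub_ne_zero.2 (Ne.symm hσs)) (hHD σ hσS) ht.le fun τ hτ => (hσc τ hτ).le
    rw [hinit σ hσS, ← hqs] at h
    change c * t ≤ (q σ - q s) / (s - σ) at h
    rw [slope_def_field, ← neg_sub s σ, div_neg]
    linarith
  linarith [hq.le_of_eventually_slope_le hS hslope, mul_pos hc ht]

end HamiltonianFlow

theorem stmt5_general (n : ℕ)
    (H₀ H₁ : ℝ → Matrix (Fin n ⊕ Fin n) (Fin n ⊕ Fin n) ℝ)
    (hH₀c : Continuous H₀) (hH₁c : Continuous H₁)
    (hH₀symm : ∀ t : ℝ, (H₀ t)ᵀ = H₀ t) (hH₁symm : ∀ t : ℝ, (H₁ t)ᵀ = H₁ t)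
    (hpos : ∀ t : ℝ, (H₁ t - H₀ t).PosDef)
    (Φ₀ : Matrix (Fin n ⊕ Fin n) (Fin n ⊕ Fin n) ℝ)
    (hΦ₀ : Φ₀ᵀ * Matrix.J (Fin n) ℝ * Φ₀ = Matrix.J (Fin n) ℝ)
    (Φ Φs : ℝ → ℝ → Matrix (Fin n ⊕ Fin n) (Fin n ⊕ Fin n) ℝ)
    (hΦc : ContinuousOn (fun p : ℝ × ℝ => Φ p.1 p.2) (Set.Icc 0 1 ×ˢ Set.univ))
    (hODE : ∀ s ∈ Set.Icc (0 : ℝ) 1, ∀ t : ℝ,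
      HasDerivAt (fun t' => Φ s t')
        (Matrix.J (Fin n) ℝ * ((1 - s) • H₀ t + s • H₁ t) * Φ s t) t)
    (hinit : ∀ s ∈ Set.Icc (0 : ℝ) 1, Φ s 0 = Φ₀)
    (hds : ∀ s ∈ Set.Icc (0 : ℝ) 1, ∀ t : ℝ,
      HasDerivWithinAt (fun s' => Φ s' t) (Φs s t) (Set.Icc 0 1) s) :
    ∀ s ∈ Set.Icc (0 : ℝ) 1, ∀ t : ℝ, 0 < t →
      (-(Matrix.J (Fin n) ℝ) * Φs s t * (Φ s t)⁻¹).PosDef := by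
  intro s hs t ht
  set H : ℝ → ℝ → Matrix (Fin n ⊕ Fin n) (Fin n ⊕ Fin n) ℝ :=
    fun σ τ => (1 - σ) • H₀ τ + σ • H₁ τ
  have hHsymm : ∀ σ τ, (H σ τ)ᵀ = H σ τ := fun σ τ => by simp [H, hH₀symm, hH₁symm]
  have hsymp : ∀ σ ∈ Icc (0 : ℝ) 1, ∀ τ, Φ σ τ ∈ symplecticGroup (Fin n) ℝ := fun σ hσ =>
    mem_symplecticGroup_of_hamiltonian (hHsymm σ) (hODE σ hσ)
      (by rw [hinit σ hσ]; exact SymplecticGroup.mem_iff'.2 hΦ₀)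
  have hHD : ∀ σ τ, H s τ - H σ τ = (s - σ) • (H₁ τ - H₀ τ) := fun σ τ => by
    simp only [H]; module
  have hneg : ∀ x ≠ 0, x ⬝ᵥ (((Φ s t)ᵀ * J (Fin n) ℝ * Φs s t) *ᵥ x) < 0 := fun x hx =>
    dotProduct_transpose_mul_J_mul_deriv_mulVec_neg hs
      (uniqueDiffOn_Icc zero_lt_one s hs).accPt ht (hH₁c.sub hH₀c) hpos (hHsymm s)
      (fun σ _ => hHD σ) hΦc hODE
      (fun σ hσ => (hinit σ hσ).trans (hinit s hs).symm) (hsymp s hs) (hds s hs t) hx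
  have hsymm := isSymm_transpose_mul_J_mul_of_hasDerivWithinAt
    (uniqueDiffOn_Icc zero_lt_one s hs) hs (fun σ hσ => hsymp σ hσ t) (hds s hs t)
  refine PosDef.mul_inv_of_conjTranspose_mul ?_ (SymplecticGroup.symplectic_det (hsymp s hs t))
  simpa [conjTranspose_eq_transpose_of_trivial, Matrix.mul_assoc] using
    posDef_neg_of_isSymm hsymm hneg

/-- Positivity in the symplectic Sturm comparison theorem: if `H₁(t) − H₀(t)` is
positive definite for all `t`, `H_s = (1−s)H₀ + sH₁`, and `Φ_s(t)` solves
`∂_t Φ_s = J H_s(t) Φ_s` with a fixed symplectic initial condition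
`Φ_s(0) = Φ₀` independent of `s` (the family being `C¹` in `(s, t)`), then for
every `s ∈ [0,1]` and `t > 0` the matrix `K_s(t) = −J (∂_s Φ_s(t)) Φ_s(t)⁻¹`
is symmetric and positive definite. -/
theorem stmt5 (n : ℕ)
    (H₀ H₁ : ℝ → Matrix (Fin n ⊕ Fin n) (Fin n ⊕ Fin n) ℝ)
    (hH₀c : Continuous H₀) (hH₁c : Continuous H₁)
    (hH₀symm : ∀ t : ℝ, (H₀ t)ᵀ = H₀ t) (hH₁symm : ∀ t : ℝ, (H₁ t)ᵀ = H₁ t)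
    (hpos : ∀ t : ℝ, (H₁ t - H₀ t).PosDef)
    (Φ₀ : Matrix (Fin n ⊕ Fin n) (Fin n ⊕ Fin n) ℝ)
    (hΦ₀ : Φ₀ᵀ * Matrix.J (Fin n) ℝ * Φ₀ = Matrix.J (Fin n) ℝ)
    (Φ Φs : ℝ → ℝ → Matrix (Fin n ⊕ Fin n) (Fin n ⊕ Fin n) ℝ)
    (hΦc : ContinuousOn (fun p : ℝ × ℝ => Φ p.1 p.2) (Set.Icc 0 1 ×ˢ Set.univ))
    (hΦsc : ContinuousOn (fun p : ℝ × ℝ => Φs p.1 p.2) (Set.Icc 0 1 ×ˢ Set.univ))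
    (hODE : ∀ s ∈ Set.Icc (0 : ℝ) 1, ∀ t : ℝ,
      HasDerivAt (fun t' => Φ s t')
        (Matrix.J (Fin n) ℝ * ((1 - s) • H₀ t + s • H₁ t) * Φ s t) t)
    (hinit : ∀ s ∈ Set.Icc (0 : ℝ) 1, Φ s 0 = Φ₀)
    (hds : ∀ s ∈ Set.Icc (0 : ℝ) 1, ∀ t : ℝ,
      HasDerivWithinAt (fun s' => Φ s' t) (Φs s t) (Set.Icc 0 1) s) :
    ∀ s ∈ Set.Icc (0 : ℝ) 1, ∀ t : ℝ, 0 < t →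
      (-(Matrix.J (Fin n) ℝ) * Φs s t * (Φ s t)⁻¹).PosDef :=
  stmt5_general n H₀ H₁ hH₀c hH₁c hH₀symm hH₁symm hpos Φ₀ hΦ₀ Φ Φs hΦc hODE hinit hds
end

section
/- Let K : ℝ^{2n} → ℝ be a C² function, let C ⊂ ℝ^{2n} be a compact set, and let c ∈ ℝ be such that ∇K does not vanish at any point of K⁻¹(c) ∩ C. Suppose there are a constant T₀ > 0, a sequence c_k → c, and nonconstant T_k-periodic solutions γ_k : ℝ → ℝ^{2n} of γ' = J∇K(γ) with image contained in C, with K(γ_k(t)) = c_k for all t, and with 0 < T_k ≤ T₀. Then there exists a nonconstant periodic solution γ of γ' = J∇K(γ) with image contained in C, with K(γ(t)) = c for all t, and with some period T satisfying 0 < T ≤ T₀. (This is the Arzelà–Ascoli limit step in the proof of the main theorem: periodic orbits on nearby levels with uniformly bounded periods converge to a periodic orbit on the limit level with period bounded by the same constant.) -/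
/-!
The Hamiltonian vector field `X = J∇K` is `C¹`, hence Lipschitz on the compact set `C`, so by
Grönwall two trajectories inside `C` separate at most exponentially in time. Replace each period
`T_k` by a multiple of it lying in `(T₀/2, T₀]`, so that the periods cannot shrink to `0`, and pass
to a subsequence along which the initial points and the periods converge. The Grönwall estimate
turns convergence of the initial points into locally uniform convergence of the orbits, so their
limit is again a trajectory of `X`; it is periodic with the limit period because the orbits are
uniformly Lipschitz in time (`‖X‖` is bounded on `C`). It lies on the level `c`, where `∇K ≠ 0`
on `C`, so it cannot be constant.
-/

open Filter Topology Metric Set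
open scoped NNReal

section StandardComplexStructure

variable (n : ℕ)

noncomputable def JstdCLM :
    EuclideanSpace ℝ (Fin n ⊕ Fin n) →L[ℝ] EuclideanSpace ℝ (Fin n ⊕ Fin n) :=
  LinearMap.toContinuousLinearMap
    { toFun := Jstd n
      map_add' := fun v w => by ext (k | k) <;> simp [Jstd]; ring
      map_smul' := fun a v => by ext (k | k) <;> simp [Jstd] }

@[simp]
theorem coe_JstdCLM : ⇑(JstdCLM n) = Jstd n := rfl

theorem Jstd_eq_zero_iff {v : EuclideanSpace ℝ (Fin n ⊕ Fin n)} : Jstd n v = 0 ↔ v = 0 := by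
  refine ⟨fun h => ?_, fun h => by rw [h, ← coe_JstdCLM, map_zero]⟩
  ext (k | k)
  · simpa [Jstd] using congr($h (Sum.inr k))
  · simpa [Jstd] using congr($h (Sum.inl k))

end StandardComplexStructure

theorem ContDiff.gradient {F : Type*} [NormedAddCommGroup F] [InnerProductSpace ℝ F]
    [CompleteSpace F] {f : F → ℝ} {m n : WithTop ℕ∞} (hf : ContDiff ℝ n f) (hmn : m + 1 ≤ n) :
    ContDiff ℝ m (gradient f) :=
  (InnerProductSpace.toDual ℝ F).symm.contDiff.comp (hf.fderiv_right hmn)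

theorem Function.Periodic.exists_period_mem_Ioc {α : Type*} {f : ℝ → α} {p T : ℝ}
    (hf : Function.Periodic f p) (hp : 0 < p) (hpT : p ≤ T) :
    ∃ q ∈ Ioc (T / 2) T, Function.Periodic f q := by
  refine ⟨⌊T / p⌋₊ * p, ⟨?_, ?_⟩, hf.nat_mul _⟩
  · have hlt : T < ⌊T / p⌋₊ * p + p := by
      have := (div_lt_iff₀ hp).1 (Nat.lt_floor_add_one (T / p))
      linarith
    have hge : p ≤ ⌊T / p⌋₊ * p := by
      have : (1 : ℝ) ≤ ⌊T / p⌋₊ := by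
        exact_mod_cast Nat.le_floor (by simpa using (one_le_div hp).2 hpT)
      nlinarith
    linarith
  · exact (le_div_iff₀ hp).1 (Nat.floor_le (div_nonneg (hp.le.trans hpT) hp.le))

section AutonomousODE

variable {E : Type*} [NormedAddCommGroup E] [NormedSpace ℝ E]

def IsTrajectory (v : E → E) (f : ℝ → E) : Prop :=
  ∀ t, HasDerivAt f (v (f t)) t

variable {v : E → E} {s : Set E} {L : ℝ≥0}

namespace IsTrajectory

theorem continuous {f : ℝ → E} (hf : IsTrajectory v f) : Continuous f :=
  continuous_iff_continuousAt.2 fun t => (hf t).continuousAt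

theorem comp_neg {f : ℝ → E} (hf : IsTrajectory v f) :
    IsTrajectory (fun x => -v x) (fun t => f (-t)) := fun t => by
  simpa [Function.comp_def] using (hf (-t)).scomp t (hasDerivAt_neg t)

theorem lipschitzWith {f : ℝ → E} {M : ℝ≥0} (hf : IsTrajectory v f) (hfs : ∀ t, f t ∈ s)
    (hM : ∀ x ∈ s, ‖v x‖ ≤ M) : LipschitzWith M f :=
  lipschitzWith_of_nnnorm_deriv_le (fun t => (hf t).differentiableAt) fun t => by
    rw [← NNReal.coe_le_coe, coe_nnnorm, (hf t).deriv]
    exact hM _ (hfs t)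

theorem exists_apply_ne {f : ℝ → E} (hf : IsTrajectory v f) {t : ℝ} (ht : v (f t) ≠ 0) :
    ∃ t₁ t₂, f t₁ ≠ f t₂ := by
  by_contra! hconst
  have : HasDerivAt f 0 t := (hasDerivAt_const t (f t)).congr_of_eventuallyEq
    (Eventually.of_forall fun u => hconst u t)
  exact ht ((hf t).unique this)

end IsTrajectory

theorem dist_le_mul_exp_of_isTrajectory_of_nonneg (hv : LipschitzOnWith L v s) {f g : ℝ → E}
    (hf : IsTrajectory v f) (hg : IsTrajectory v g) (hfs : ∀ t, f t ∈ s) (hgs : ∀ t, g t ∈ s)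
    {t : ℝ} (ht : 0 ≤ t) : dist (f t) (g t) ≤ dist (f 0) (g 0) * Real.exp (L * t) := by
  simpa using dist_le_of_trajectories_ODE_of_mem (v := fun _ => v) (s := fun _ => s) (b := t)
    (fun _ _ => hv) hf.continuous.continuousOn (fun u _ => (hf u).hasDerivWithinAt)
    (fun u _ => hfs u) hg.continuous.continuousOn (fun u _ => (hg u).hasDerivWithinAt)
    (fun u _ => hgs u) le_rfl t ⟨ht, le_rfl⟩

theorem dist_le_mul_exp_abs_of_isTrajectory (hv : LipschitzOnWith L v s) {f g : ℝ → E}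
    (hf : IsTrajectory v f) (hg : IsTrajectory v g) (hfs : ∀ t, f t ∈ s) (hgs : ∀ t, g t ∈ s)
    (t : ℝ) : dist (f t) (g t) ≤ dist (f 0) (g 0) * Real.exp (L * |t|) := by
  rcases le_or_gt 0 t with ht | ht
  · simpa [abs_of_nonneg ht] using dist_le_mul_exp_of_isTrajectory_of_nonneg hv hf hg hfs hgs ht
  · have hv' : LipschitzOnWith L (fun x => -v x) s := fun x hx y hy => by
      simpa [edist_neg_neg] using hv hx hy
    simpa [abs_of_neg ht] using dist_le_mul_exp_of_isTrajectory_of_nonneg hv' hf.comp_neg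
      hg.comp_neg (fun u => hfs (-u)) (fun u => hgs (-u)) (neg_nonneg.2 ht.le)

variable {f : ℕ → ℝ → E}

theorem exists_tendsto_of_isTrajectory [CompleteSpace E] (hv : LipschitzOnWith L v s)
    (hf : ∀ k, IsTrajectory v (f k)) (hfs : ∀ k t, f k t ∈ s) {x₀ : E}
    (h0 : Tendsto (fun k => f k 0) atTop (𝓝 x₀)) :
    ∃ g : ℝ → E, ∀ t, Tendsto (fun k => f k t) atTop (𝓝 (g t)) := by
  suffices ∀ t, CauchySeq fun k => f k t from
    ⟨fun t => limUnder atTop fun k => f k t, fun t => (this t).tendsto_limUnder⟩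
  intro t
  have hexp : 0 < Real.exp (L * |t|) := Real.exp_pos _
  refine Metric.cauchySeq_iff.2 fun ε hε => ?_
  obtain ⟨N, hN⟩ := Metric.cauchySeq_iff.1 h0.cauchySeq (ε / Real.exp (L * |t|)) (by positivity)
  refine ⟨N, fun m hm k hk => ?_⟩
  calc dist (f m t) (f k t) ≤ dist (f m 0) (f k 0) * Real.exp (L * |t|) :=
        dist_le_mul_exp_abs_of_isTrajectory hv (hf m) (hf k) (hfs m) (hfs k) t
    _ < ε / Real.exp (L * |t|) * Real.exp (L * |t|) := by gcongr; exact hN m hm k hk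
    _ = ε := div_mul_cancel₀ ε hexp.ne'

theorem tendstoUniformlyOn_ball_of_isTrajectory (hv : LipschitzOnWith L v s)
    (hf : ∀ k, IsTrajectory v (f k)) (hfs : ∀ k t, f k t ∈ s) {g : ℝ → E}
    (hg : ∀ t, Tendsto (fun k => f k t) atTop (𝓝 (g t))) (A : ℝ) :
    TendstoUniformlyOn f g atTop (ball 0 A) := by
  have hbound : ∀ k t, dist (f k t) (g t) ≤ dist (f k 0) (g 0) * Real.exp (L * |t|) :=
    fun k t => le_of_tendsto_of_tendsto' (tendsto_const_nhds.dist (hg t))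
      ((tendsto_const_nhds.dist (hg 0)).mul_const _)
      fun m => dist_le_mul_exp_abs_of_isTrajectory hv (hf k) (hf m) (hfs k) (hfs m) t
  have hsmall : Tendsto (fun k => dist (f k 0) (g 0) * Real.exp (L * A)) atTop (𝓝 0) := by
    simpa using (tendsto_iff_dist_tendsto_zero.1 (hg 0)).mul_const (Real.exp (L * A))
  refine Metric.tendstoUniformlyOn_iff.2 fun ε hε => ?_
  filter_upwards [hsmall.eventually (gt_mem_nhds hε)] with k hk t ht
  have htA : |t| ≤ A := by simpa using (mem_ball_zero_iff.1 ht).le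
  calc dist (g t) (f k t) ≤ dist (f k 0) (g 0) * Real.exp (L * |t|) := by
        rw [dist_comm]; exact hbound k t
    _ ≤ dist (f k 0) (g 0) * Real.exp (L * A) := by gcongr
    _ < ε := hk

theorem exists_isTrajectory_tendsto [CompleteSpace E] (hv : LipschitzOnWith L v s)
    (hs : IsClosed s) (hf : ∀ k, IsTrajectory v (f k)) (hfs : ∀ k t, f k t ∈ s) {x₀ : E}
    (h0 : Tendsto (fun k => f k 0) atTop (𝓝 x₀)) :
    ∃ g : ℝ → E, IsTrajectory v g ∧ ∀ t, Tendsto (fun k => f k t) atTop (𝓝 (g t)) := by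
  obtain ⟨g, hg⟩ := exists_tendsto_of_isTrajectory hv hf hfs h0
  have hgs : ∀ t, g t ∈ s := fun t => hs.mem_of_tendsto (hg t) (Eventually.of_forall (hfs · t))
  refine ⟨g, fun t => ?_, hg⟩
  have hunif := tendstoUniformlyOn_ball_of_isTrajectory hv hf hfs hg (|t| + 1)
  have hunif' : TendstoUniformlyOn (fun k u => v (f k u)) (fun u => v (g u)) atTop
      (ball 0 (|t| + 1)) :=
    hv.uniformContinuousOn.comp_tendstoUniformlyOn_eventually
      (Eventually.of_forall fun k u _ => hfs k u) (fun u _ => hgs u) hunif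
  exact hasDerivAt_of_tendstoUniformlyOn isOpen_ball hunif'
    (Eventually.of_forall fun k u _ => hf k u) (fun u _ => hg u) (by simp)

end AutonomousODE

theorem Function.periodic_of_tendsto_of_lipschitzWith {α : Type*} [MetricSpace α]
    {f : ℕ → ℝ → α} {g : ℝ → α} {p : ℕ → ℝ} {T : ℝ} {M : ℝ≥0}
    (hf : ∀ k, LipschitzWith M (f k)) (hper : ∀ k, Function.Periodic (f k) (p k))
    (hfg : ∀ t, Tendsto (fun k => f k t) atTop (𝓝 (g t))) (hp : Tendsto p atTop (𝓝 T)) :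
    Function.Periodic g T := fun t => by
  have hshift : Tendsto (fun k => M * dist (t + T) (t + p k)) atTop (𝓝 0) := by
    simpa using ((tendsto_const_nhds (x := t + T)).dist
      ((tendsto_const_nhds (x := t)).add hp)).const_mul (M : ℝ)
  refine dist_le_zero.1 (le_of_tendsto_of_tendsto' ((hfg (t + T)).dist (hfg t)) hshift fun k => ?_)
  calc dist (f k (t + T)) (f k t) = dist (f k (t + T)) (f k (t + p k)) := by rw [hper k t]
    _ ≤ M * dist (t + T) (t + p k) := (hf k).dist_le_mul _ _

theorem stmt10_general (n : ℕ) (K : EuclideanSpace ℝ (Fin n ⊕ Fin n) → ℝ)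
    (hK : ContDiff ℝ 2 K)
    (C : Set (EuclideanSpace ℝ (Fin n ⊕ Fin n))) (hC : IsCompact C)
    (c : ℝ) (hreg : ∀ x ∈ K ⁻¹' {c} ∩ C, gradient K x ≠ 0)
    (T₀ : ℝ)
    (ck : ℕ → ℝ) (hck : Filter.Tendsto ck Filter.atTop (nhds c))
    (γ : ℕ → ℝ → EuclideanSpace ℝ (Fin n ⊕ Fin n)) (Tk : ℕ → ℝ)
    (hsol : ∀ (j : ℕ) (t : ℝ), HasDerivAt (γ j) (Jstd n (gradient K (γ j t))) t)
    (himg : ∀ (j : ℕ) (t : ℝ), γ j t ∈ C)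
    (hlev : ∀ (j : ℕ) (t : ℝ), K (γ j t) = ck j)
    (hper : ∀ (j : ℕ) (t : ℝ), γ j (t + Tk j) = γ j t)
    (hTk : ∀ j : ℕ, 0 < Tk j ∧ Tk j ≤ T₀) :
    ∃ (γ₀ : ℝ → EuclideanSpace ℝ (Fin n ⊕ Fin n)) (T : ℝ),
      0 < T ∧ T ≤ T₀ ∧
      (∀ t : ℝ, HasDerivAt γ₀ (Jstd n (gradient K (γ₀ t))) t) ∧
      (∀ t : ℝ, γ₀ (t + T) = γ₀ t) ∧
      (∀ t : ℝ, K (γ₀ t) = c) ∧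
      (∀ t : ℝ, γ₀ t ∈ C) ∧
      (∃ t₁ t₂ : ℝ, γ₀ t₁ ≠ γ₀ t₂) := by
  set X := fun x => Jstd n (gradient K x)
  have hγ : ∀ j, IsTrajectory X (γ j) := hsol
  have hX : ContDiff ℝ 1 X := (JstdCLM n).contDiff.comp (hK.gradient le_rfl)
  obtain ⟨L, hL⟩ := hX.locallyLipschitz.locallyLipschitzOn.exists_lipschitzOnWith_of_compact hC
  obtain ⟨M, hM⟩ := hC.exists_bound_of_continuousOn hX.continuous.continuousOn
  choose T' hT' hT'per using fun j =>
    Function.Periodic.exists_period_mem_Ioc (hper j) (hTk j).1 (hTk j).2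
  obtain ⟨⟨_, T⟩, hmem, φ, hφ, hlim⟩ := (hC.prod isCompact_Icc).tendsto_subseq
    (x := fun j => (γ j 0, T' j)) fun j => ⟨himg j 0, Ioc_subset_Icc_self (hT' j)⟩
  have hT : T ∈ Icc (T₀ / 2) T₀ := hmem.2
  obtain ⟨γ₀, hγ₀, hconv⟩ := exists_isTrajectory_tendsto hL hC.isClosed (fun k => hγ (φ k))
    (fun k => himg (φ k)) hlim.fst_nhds
  have hγ₀C : ∀ t, γ₀ t ∈ C := fun t =>
    hC.isClosed.mem_of_tendsto (hconv t) (Eventually.of_forall fun k => himg (φ k) t)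
  have hγ₀lev : ∀ t, K (γ₀ t) = c := fun t =>
    tendsto_nhds_unique ((hK.continuous.tendsto _).comp (hconv t))
      (by simpa [Function.comp_def, hlev] using hck.comp hφ.tendsto_atTop)
  refine ⟨γ₀, T, by linarith [hT.1, hTk 0], hT.2, hγ₀, ?_, hγ₀lev, hγ₀C,
    hγ₀.exists_apply_ne (t := 0) ?_⟩
  · exact Function.periodic_of_tendsto_of_lipschitzWith
      (fun k => (hγ (φ k)).lipschitzWith (M := M.toNNReal) (himg (φ k))
        fun x hx => (hM x hx).trans (Real.le_coe_toNNReal M))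
      (fun k => hT'per (φ k)) hconv hlim.snd_nhds
  · exact (Jstd_eq_zero_iff n).not.2 (hreg _ ⟨hγ₀lev 0, hγ₀C 0⟩)

/-- Arzelà–Ascoli limit step: if a regular (for `K` on `C`) value `c` is the
limit of values `c_k` whose levels carry nonconstant periodic orbits `γ_k` of
the Hamiltonian flow of `K` lying in a compact set `C` with periods
`0 < T_k ≤ T₀`, then the level `K = c` also carries a nonconstant periodic
orbit lying in `C` with some period `T` satisfying `0 < T ≤ T₀`. -/
theorem stmt10 (n : ℕ) (K : EuclideanSpace ℝ (Fin n ⊕ Fin n) → ℝ)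
    (hK : ContDiff ℝ 2 K)
    (C : Set (EuclideanSpace ℝ (Fin n ⊕ Fin n))) (hC : IsCompact C)
    (c : ℝ) (hreg : ∀ x ∈ K ⁻¹' {c} ∩ C, gradient K x ≠ 0)
    (T₀ : ℝ) (hT₀ : 0 < T₀)
    (ck : ℕ → ℝ) (hck : Filter.Tendsto ck Filter.atTop (nhds c))
    (γ : ℕ → ℝ → EuclideanSpace ℝ (Fin n ⊕ Fin n)) (Tk : ℕ → ℝ)
    (hsol : ∀ (j : ℕ) (t : ℝ), HasDerivAt (γ j) (Jstd n (gradient K (γ j t))) t)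
    (himg : ∀ (j : ℕ) (t : ℝ), γ j t ∈ C)
    (hlev : ∀ (j : ℕ) (t : ℝ), K (γ j t) = ck j)
    (hper : ∀ (j : ℕ) (t : ℝ), γ j (t + Tk j) = γ j t)
    (hTk : ∀ j : ℕ, 0 < Tk j ∧ Tk j ≤ T₀)
    (hnc : ∀ j : ℕ, ∃ t₁ t₂ : ℝ, γ j t₁ ≠ γ j t₂) :
    ∃ (γ₀ : ℝ → EuclideanSpace ℝ (Fin n ⊕ Fin n)) (T : ℝ),
      0 < T ∧ T ≤ T₀ ∧
      (∀ t : ℝ, HasDerivAt γ₀ (Jstd n (gradient K (γ₀ t))) t) ∧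
      (∀ t : ℝ, γ₀ (t + T) = γ₀ t) ∧
      (∀ t : ℝ, K (γ₀ t) = c) ∧
      (∀ t : ℝ, γ₀ t ∈ C) ∧
      (∃ t₁ t₂ : ℝ, γ₀ t₁ ≠ γ₀ t₂) :=
  stmt10_general n K hK C hC c hreg T₀ ck hck γ Tk hsol himg hlev hper hTk
end

section
/- Let X : ℝ^m → ℝ^m be a continuous vector field and C ⊂ ℝ^m a compact set on which X has no zeros. Then there exists τ > 0 such that every nonconstant periodic solution γ of γ' = X(γ) whose image is contained in C has every period ≥ τ; that is, periods of periodic orbits in a compact region free of rest points are bounded away from zero. (This lower bound on periods is what guarantees that, in the Arzelà–Ascoli limit argument of the paper, the limiting periodic orbit on a regular energy level is nonconstant.) -/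
/-!
If `‖X‖ ≤ M` on `C` and `⟪X x, X y⟫ > 0` whenever `x, y ∈ C` are `δ`-close (uniform continuity
and compactness give such a `δ`), then along a solution `γ` in `C` the function
`t ↦ ⟪X (γ 0), γ t⟫` is strictly increasing on `[0, T]` as long as `M T < δ`, because `γ` moves
with speed at most `M`. Hence `γ T ≠ γ 0`, so every period is at least `δ / M`.
-/

open Set
open scoped RealInnerProductSpace

section InnerProductSpace

variable {E : Type*} [NormedAddCommGroup E] [InnerProductSpace ℝ E]

lemma real_inner_pos_of_norm_sub_lt_norm {u v : E} (h : ‖u - v‖ < ‖u‖) : 0 < ⟪u, v⟫ := by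
  have hinner : ⟪u, v⟫ = ‖u‖ ^ 2 - ⟪u, u - v⟫ := by
    rw [inner_sub_right, real_inner_self_eq_norm_sq]; ring
  nlinarith [real_inner_le_norm u (u - v), norm_nonneg (u - v)]

lemma IsCompact.exists_pos_forall_dist_lt_inner_pos {α : Type*} [PseudoMetricSpace α]
    {C : Set α} (hC : IsCompact C) {X : α → E} (hX : ContinuousOn X C)
    (hXC : ∀ x ∈ C, X x ≠ 0) :
    ∃ δ > 0, ∀ x ∈ C, ∀ y ∈ C, dist x y < δ → 0 < ⟪X x, X y⟫ := by
  obtain ⟨ε, hε, hεX⟩ := hC.exists_forall_le' hX.norm fun x hx => norm_pos_iff.mpr (hXC x hx)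
  obtain ⟨δ, hδ, hδX⟩ :=
    Metric.uniformContinuousOn_iff.mp (hC.uniformContinuousOn_of_continuous hX) ε hε
  refine ⟨δ, hδ, fun x hx y hy hxy => real_inner_pos_of_norm_sub_lt_norm ?_⟩
  rw [← dist_eq_norm]
  exact (hδX x hx y hy hxy).trans_le (hεX x hx)

lemma inner_lt_inner_of_hasDerivAt {f f' : ℝ → E} {c : E} {a b : ℝ} (hab : a < b)
    (hf : ∀ t ∈ Icc a b, HasDerivAt f (f' t) t) (hpos : ∀ t ∈ Ioo a b, 0 < ⟪c, f' t⟫) :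
    ⟪c, f a⟫ < ⟪c, f b⟫ := by
  have hderiv : ∀ t ∈ Icc a b, HasDerivAt (fun s => ⟪c, f s⟫) ⟪c, f' t⟫ t := fun t ht => by
    simpa using (hasDerivAt_const t c).inner ℝ (hf t ht)
  have hmono : StrictMonoOn (fun s => ⟪c, f s⟫) (Icc a b) := by
    refine strictMonoOn_of_hasDerivWithinAt_pos (f' := fun t => ⟪c, f' t⟫) (convex_Icc a b)
      (fun t ht => (hderiv t ht).continuousAt.continuousWithinAt) (fun t ht => ?_) ?_
    · rw [interior_Icc] at ht
      exact (hderiv t (Ioo_subset_Icc_self ht)).hasDerivWithinAt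
    · simpa only [interior_Icc] using hpos
  exact hmono (left_mem_Icc.mpr hab.le) (right_mem_Icc.mpr hab.le) hab

lemma le_mul_period_of_inner_pos {X : E → E} {γ : ℝ → E} {δ M T : ℝ}
    (hγ : ∀ t, HasDerivAt γ (X (γ t)) t) (hM : ∀ t, ‖X (γ t)‖ ≤ M)
    (hδ : ∀ s t, dist (γ s) (γ t) < δ → 0 < ⟪X (γ s), X (γ t)⟫)
    (hT : 0 < T) (hper : γ T = γ 0) : δ ≤ M * T := by
  by_contra! hMT
  have hdisp : ∀ t ∈ Icc 0 T, ‖γ t - γ 0‖ ≤ M * (t - 0) :=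
    norm_image_sub_le_of_norm_deriv_le_segment' (fun t _ => (hγ t).hasDerivWithinAt)
      (fun t _ => hM t)
  have hM₀ : 0 ≤ M := (norm_nonneg _).trans (hM 0)
  have hclose : ∀ t ∈ Icc 0 T, dist (γ 0) (γ t) < δ := fun t ht => by
    have hMt : M * t ≤ M * T := mul_le_mul_of_nonneg_left ht.2 hM₀
    rw [dist_comm, dist_eq_norm]
    linarith [hdisp t ht]
  have hlt := inner_lt_inner_of_hasDerivAt (c := X (γ 0)) hT (fun t _ => hγ t)
    fun t ht => hδ 0 t (hclose t (Ioo_subset_Icc_self ht))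
  rw [hper] at hlt
  exact lt_irrefl _ hlt

end InnerProductSpace

/-- Periods of periodic orbits in a compact region free of rest points are
bounded away from zero: if `X` is a continuous vector field with no zeros on
a compact set `C`, then there is `τ > 0` such that every nonconstant periodic
solution of `γ' = X(γ)` with image contained in `C` has every period `≥ τ`. -/
theorem stmt11 (m : ℕ)
    (X : EuclideanSpace ℝ (Fin m) → EuclideanSpace ℝ (Fin m))
    (hX : Continuous X)
    (C : Set (EuclideanSpace ℝ (Fin m))) (hC : IsCompact C)
    (hXC : ∀ x ∈ C, X x ≠ 0) :
    ∃ τ > (0 : ℝ), ∀ γ : ℝ → EuclideanSpace ℝ (Fin m),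
      (∀ t : ℝ, HasDerivAt γ (X (γ t)) t) →
      (∀ t : ℝ, γ t ∈ C) →
      (∃ t₁ t₂ : ℝ, γ t₁ ≠ γ t₂) →
      ∀ T : ℝ, 0 < T → (∀ t : ℝ, γ (t + T) = γ t) → τ ≤ T := by
  obtain ⟨δ, hδ, hδX⟩ := hC.exists_pos_forall_dist_lt_inner_pos hX.continuousOn hXC
  obtain ⟨M, hM, hMX⟩ := (hC.image hX).isBounded.exists_pos_norm_le
  refine ⟨δ / M, div_pos hδ hM, fun γ hγ hγC _ T hT hper => ?_⟩
  have hδMT : δ ≤ M * T :=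
    le_mul_period_of_inner_pos hγ (fun t => hMX _ (mem_image_of_mem X (hγC t)))
      (fun s t => hδX _ (hγC s) _ (hγC t)) hT (by simpa using hper 0)
  rwa [div_le_iff₀' hM]
end
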